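/- Let (A, L) be an extended complete spectral metric space, F = (f_1, …, f_k) a strictly contractive dual IFS on A with Λ := max_i dilup(f_i) < 1, φ₀ a state on A with C := max_i d_L(φ₀, φ₀ ∘ f_i) < ∞, and π weights with every π_i > 0. Let Ω := {1, …, k}^ℕ carry the product σ-algebra where each factor has the discrete σ-algebra, and let P_π be the product probability measure on Ω whose every factor assigns mass π_i to the symbol i. For ω ∈ Ω let φ_ω denote the d_L-limit of (φ₀ ∘ f_{ω|_M})_{M=1}^∞, and let φ_π denote the d_L-limit of ((π·F*)^M(φ₀))_{M=0}^∞. Then for every a ∈ A the function ω ↦ φ_ω(a) is measurable, and φ_π(a) = ∫_Ω φ_ω(a) dP_π(ω). -/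

import Mathlib

/-! `d_L`-convergence of norm-bounded functionals implies pointwise convergence: on a
self-adjoint `b` with `L b < ∞` the difference is at most `(1 + L b) · d_L`, such `b` are dense,
a norm-bounded family of functionals is equicontinuous, and every element is `re + i·im` of
self-adjoint ones. Hence `φ₀ ∘ f_{ω|M} → φ_ω` and `(π·F*)^M φ₀ → φ_π` pointwise.
Since `P_π` gives the cylinder of a word of length `M` the product of the weights along it,
`(π·F*)^M φ₀ (a)` is exactly `∫ φ₀ (f_{ω|M} a) dP_π(ω)`; each integrand depends on finitely many
coordinates and is bounded by `‖φ₀‖ ‖a‖`, so the pointwise limit `φ_ω(a)` is measurable and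
dominated convergence identifies the two limits. -/

open Filter Topology
open scoped ComplexOrder ENNReal NNReal MultiplierAlgebra

noncomputable section

/-- A *state* on a C⋆-algebra: a continuous linear functional into `ℂ` that is nonnegative
on nonnegative elements and has norm `1`. -/
def IsState {E : Type*} [NormedAddCommGroup E] [NormedSpace ℂ E] [PartialOrder E]
    (φ : E →L[ℂ] ℂ) : Prop :=
  (∀ a : E, 0 ≤ a → 0 ≤ φ a) ∧ ‖φ‖ = 1

variable {A : Type*} [NonUnitalCStarAlgebra A] [PartialOrder A] [StarOrderedRing A]

/-- `L` is an extended seminorm on the self-adjoint part `A_sa` of `A`: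
`L (t • b) = |t| * L b` for real `t`, and `L (b + b') ≤ L b + L b'`. -/
def IsESeminorm (L : selfAdjoint A → ℝ≥0∞) : Prop :=
  (∀ (t : ℝ) (b : selfAdjoint A), L (t • b) = (‖t‖₊ : ℝ≥0∞) * L b) ∧
    ∀ b b' : selfAdjoint A, L (b + b') ≤ L b + L b'

/-- The spectral distance `d_L(φ, ψ) = sup { |φ b - ψ b| : b ∈ A_sa, L b ≤ 1 }`,
valued in `[0, ∞]`. -/
def dL (L : selfAdjoint A → ℝ≥0∞) (φ ψ : A → ℂ) : ℝ≥0∞ :=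
  ⨆ b : {b : selfAdjoint A // L b ≤ 1}, (‖φ (b.1 : A) - ψ (b.1 : A)‖₊ : ℝ≥0∞)

/-- An approximate identity for `A`: a net `(I n)` with `0 ≤ I n`, `‖I n‖ ≤ 1`, and
`‖I n * a - a‖ → 0`, `‖a * I n - a‖ → 0` for every `a : A`. -/
def IsApproxUnit {ι : Type*} [Preorder ι] (I : ι → A) : Prop :=
  (∀ n, 0 ≤ I n) ∧ (∀ n, ‖I n‖ ≤ 1) ∧
    ∀ a : A, Tendsto (fun n => ‖I n * a - a‖) atTop (𝓝 0) ∧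
      Tendsto (fun n => ‖a * I n - a‖) atTop (𝓝 0)

/-- A (self-adjoint valued) approximate identity `(I n)` for `A` along which `L` tends to `0`. -/
structure SpectralAUData (L : selfAdjoint A → ℝ≥0∞) where
  ι : Type
  [pre : Preorder ι]
  [ne : Nonempty ι]
  [dir : IsDirected ι (· ≤ ·)]
  I : ι → selfAdjoint A
  isAU : IsApproxUnit fun n => (I n : A)
  tendsto_L : Tendsto (fun n => L (I n)) atTop (𝓝 0)

/-- `(A, L)` is an extended complete spectral metric space: the finite-`L` self-adjoint
elements are dense, there is an approximate identity along which `L` tends to `0`, and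
`L` is norm-lower semicontinuous. -/
structure IsECSMS (L : selfAdjoint A → ℝ≥0∞) : Prop where
  seminorm : IsESeminorm L
  dense_finite : Dense {b : selfAdjoint A | L b < ⊤}
  lsc : LowerSemicontinuous L
  approxUnit : Nonempty (SpectralAUData L)

/-- A witness that the `*`-homomorphism `f : A → A` is proper: an approximate identity
whose image under `f` is again an approximate identity. -/
structure ProperWitness (f : A →⋆ₙₐ[ℂ] A) where
  ι : Type
  [pre : Preorder ι]
  [ne : Nonempty ι]
  [dir : IsDirected ι (· ≤ ·)]
  I : ι → A
  isAU : IsApproxUnit I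
  isAU_map : IsApproxUnit fun n => f (I n)

/-- A `*`-homomorphism `f : A → A` is proper if there is an approximate identity `(I n)`
for `A` such that `(f (I n))` is again an approximate identity for `A`. -/
def IsProperHom (f : A →⋆ₙₐ[ℂ] A) : Prop := Nonempty (ProperWitness f)

/-- The upper dilation factor `dilup f = sup { L (f b) : b ∈ A_sa, L b ≤ 1 }`. -/
def dilup (L : selfAdjoint A → ℝ≥0∞) (f : A →⋆ₙₐ[ℂ] A) : ℝ≥0∞ :=
  ⨆ b : {b : selfAdjoint A // L b ≤ 1}, L ⟨f (b.1 : A), b.1.2.map f⟩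

/-- The dual operator `(π·F*) φ = Σ_i π_i (φ ∘ f_i)` acting on `ℂ`-valued functionals. -/
def piF {k : ℕ} (f : Fin k → A →⋆ₙₐ[ℂ] A) (π : Fin k → ℝ≥0) (φ : A → ℂ) : A → ℂ :=
  fun a => ∑ i, ((π i : ℝ) : ℂ) * φ (f i a)

/-- For a finite word `ω = (ω 0, …, ω (M-1))`, the composite `f_ω = f_{ω 0} ∘ … ∘ f_{ω (M-1)}`. -/
def wordMapF {k : ℕ} (f : Fin k → A →⋆ₙₐ[ℂ] A) : (M : ℕ) → (Fin M → Fin k) → A → A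
  | 0, _, a => a
  | M + 1, ω, a => wordMapF f M (fun i => ω i.castSucc) (f (ω (Fin.last M)) a)

open MeasureTheory
open scoped CStarAlgebra

lemma tendsto_apply_of_forall_selfAdjoint {E : Type*} [NormedAddCommGroup E] [NormedSpace ℂ E]
    [StarAddMonoid E] [StarModule ℂ E] {ι : Type*} {l : Filter ι} {ψ : ι → E →L[ℂ] ℂ}
    {φ : E →L[ℂ] ℂ} (h : ∀ b : selfAdjoint E, Tendsto (fun i => ψ i b) l (𝓝 (φ b))) (a : E) :
    Tendsto (fun i => ψ i a) l (𝓝 (φ a)) := by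
  have hdecomp : ∀ χ : E →L[ℂ] ℂ,
      χ a = χ (realPart a : E) + Complex.I * χ (imaginaryPart a : E) := fun χ => by
    conv_lhs => rw [← realPart_add_I_smul_imaginaryPart a]
    rw [map_add, map_smul, smul_eq_mul]
  simp only [hdecomp]
  exact (h _).add ((h _).const_mul _)

section SpectralDistance

variable {B : Type*} [NonUnitalCStarAlgebra B] {L : selfAdjoint B → ℝ≥0∞}

lemma nnnorm_sub_le_mul_dL (hL : IsESeminorm L) (φ ψ : B →L[ℂ] ℂ) {b : selfAdjoint B}
    {c : ℝ≥0} (hc : c ≠ 0) (hb : L b ≤ c) :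
    (‖φ b - ψ b‖₊ : ℝ≥0∞) ≤ c * dL L φ ψ := by
  have hinv : (‖(c : ℝ)⁻¹‖₊ : ℝ≥0∞) = (c : ℝ≥0∞)⁻¹ := by
    rw [nnnorm_inv, NNReal.nnnorm_eq, ENNReal.coe_inv hc]
  have hscaled : L ((c : ℝ)⁻¹ • b) ≤ 1 := by
    rw [hL.1, hinv]
    calc (c : ℝ≥0∞)⁻¹ * L b ≤ (c : ℝ≥0∞)⁻¹ * c := by gcongr
      _ = 1 := ENNReal.inv_mul_cancel (by simpa using hc) ENNReal.coe_ne_top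
  have hle := le_iSup (fun b : {b : selfAdjoint B // L b ≤ 1} =>
    (‖φ (b.1 : B) - ψ (b.1 : B)‖₊ : ℝ≥0∞)) ⟨_, hscaled⟩
  simp only [selfAdjoint.val_smul, φ.map_smul_of_tower, ψ.map_smul_of_tower, ← smul_sub,
    nnnorm_smul, ENNReal.coe_mul, hinv] at hle
  calc (‖φ b - ψ b‖₊ : ℝ≥0∞) = c * ((c : ℝ≥0∞)⁻¹ * ‖φ b - ψ b‖₊) := by
        rw [← mul_assoc, ENNReal.mul_inv_cancel (by simpa using hc) ENNReal.coe_ne_top, one_mul]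
    _ ≤ c * dL L φ ψ := by gcongr; exact hle

lemma tendsto_apply_of_tendsto_dL {ι : Type*} {l : Filter ι} (hL : IsESeminorm L)
    {ψ : ι → B →L[ℂ] ℂ} {φ : B →L[ℂ] ℂ} (h : Tendsto (fun i => dL L (ψ i) φ) l (𝓝 0))
    {b : selfAdjoint B} (hb : L b ≠ ⊤) :
    Tendsto (fun i => ψ i b) l (𝓝 (φ b)) := by
  set c : ℝ≥0 := (L b).toNNReal + 1
  have hbc : L b ≤ c := by
    rw [← ENNReal.coe_toNNReal hb]
    exact_mod_cast le_self_add
  have hc : Tendsto (fun i => (c : ℝ≥0∞) * dL L (ψ i) φ) l (𝓝 0) := by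
    simpa using ENNReal.Tendsto.const_mul h (Or.inr ENNReal.coe_ne_top)
  rw [tendsto_iff_edist_tendsto_0]
  refine tendsto_of_tendsto_of_tendsto_of_le_of_le tendsto_const_nhds hc (fun _ => zero_le)
    fun i => ?_
  rw [edist_nndist, nndist_eq_nnnorm]
  exact nnnorm_sub_le_mul_dL hL _ _ (by positivity) hbc

lemma tendsto_apply_of_tendsto_dL_of_bounded {ι : Type*} {l : Filter ι} (hL : IsESeminorm L)
    (hdense : Dense {b : selfAdjoint B | L b < ⊤}) {ψ : ι → B →L[ℂ] ℂ} {φ : B →L[ℂ] ℂ} {K : ℝ}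
    (hψ : ∀ i, ‖ψ i‖ ≤ K)
    (h : Tendsto (fun i => dL L (ψ i) φ) l (𝓝 0)) (a : B) :
    Tendsto (fun i => ψ i a) l (𝓝 (φ a)) := by
  have hequi : Equicontinuous fun i (b : selfAdjoint B) => ψ i b := by
    have hbdd : Equicontinuous (DFunLike.coe ∘ ψ) :=
      (show (∃ C, ∀ i, ‖ψ i‖ ≤ C) ↔ _ from (NormedSpace.equicontinuous_TFAE ψ).out 5 1).mp
        ⟨K, hψ⟩
    exact (equicontinuous_restrict_iff _).2 (hbdd.equicontinuousOn (selfAdjoint B : Set B))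
  refine tendsto_apply_of_forall_selfAdjoint (fun b => ?_) a
  refine hdense.induction (fun b hb => tendsto_apply_of_tendsto_dL hL h hb.ne)
    (hequi.isClosed_setOfPred_tendsto ?_) b
  fun_prop

end SpectralDistance

namespace NonUnitalStarAlgHom

variable {B C : Type*} [NonUnitalCStarAlgebra B] [NonUnitalCStarAlgebra C]

def toContinuousLinearMap (g : B →⋆ₙₐ[ℂ] C) : B →L[ℂ] C := ⟨g, map_continuous g⟩

@[simp]
lemma coe_toContinuousLinearMap (g : B →⋆ₙₐ[ℂ] C) : ⇑g.toContinuousLinearMap = g := rfl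

lemma norm_toContinuousLinearMap_le (g : B →⋆ₙₐ[ℂ] C) : ‖g.toContinuousLinearMap‖ ≤ 1 :=
  ContinuousLinearMap.opNorm_le_bound _ zero_le_one fun a => by
    simpa using norm_apply_le g a

end NonUnitalStarAlgHom

section Words

variable {B : Type*} [NonUnitalCStarAlgebra B] {k : ℕ} (f : Fin k → B →⋆ₙₐ[ℂ] B)

def wordHom : (M : ℕ) → (Fin M → Fin k) → B →⋆ₙₐ[ℂ] B
  | 0, _ => NonUnitalStarAlgHom.id ℂ B
  | M + 1, ω => (wordHom M (Fin.init ω)).comp (f (ω (Fin.last M)))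

lemma coe_wordHom : ∀ (M : ℕ) (ω : Fin M → Fin k), ⇑(wordHom f M ω) = wordMapF f M ω
  | 0, _ => rfl
  | M + 1, ω => by
    ext a
    simp only [wordHom, NonUnitalStarAlgHom.comp_apply, coe_wordHom M]
    rfl

lemma piF_iterate_apply (π : Fin k → ℝ≥0) :
    ∀ (M : ℕ) (φ : B → ℂ) (a : B), (piF f π)^[M] φ a =
      ∑ ω : Fin M → Fin k, ((∏ i, (π (ω i) : ℝ) : ℝ) : ℂ) * φ (wordMapF f M ω a)
  | 0, φ, a => by simp [wordMapF]
  | M + 1, φ, a => by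
    -- splitting off the last letter with `Fin.snoc` follows the recursion of `wordMapF`
    rw [Function.iterate_succ_apply', piF, ← (Fin.snocEquiv fun _ => Fin k).sum_comp,
      Fintype.sum_prod_type]
    refine Finset.sum_congr rfl fun j _ => ?_
    rw [piF_iterate_apply π M, Finset.mul_sum]
    refine Finset.sum_congr rfl fun ω _ => ?_
    simp only [Fin.snocEquiv_apply, Fin.prod_univ_castSucc, Fin.snoc_castSucc, Fin.snoc_last,
      wordMapF]
    push_cast
    ring

lemma norm_wordMapF_le (M : ℕ) (ω : Fin M → Fin k) (a : B) : ‖wordMapF f M ω a‖ ≤ ‖a‖ := by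
  rw [← coe_wordHom]
  exact NonUnitalStarAlgHom.norm_apply_le _ a

def piFCLM (π : Fin k → ℝ≥0) (φ : B →L[ℂ] ℂ) : B →L[ℂ] ℂ :=
  ∑ i, ((π i : ℝ) : ℂ) • φ.comp (f i).toContinuousLinearMap

lemma coe_piFCLM (π : Fin k → ℝ≥0) (φ : B →L[ℂ] ℂ) : ⇑(piFCLM f π φ) = piF f π φ := by
  ext a
  simp [piFCLM, piF]

lemma coe_piFCLM_iterate (π : Fin k → ℝ≥0) (M : ℕ) (φ : B →L[ℂ] ℂ) :
    ⇑((piFCLM f π)^[M] φ) = (piF f π)^[M] φ :=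
  Function.Semiconj.iterate_right (f := DFunLike.coe) (coe_piFCLM f π) M φ

lemma norm_piFCLM_le {π : Fin k → ℝ≥0} (hπ : ∑ i, π i = 1) (φ : B →L[ℂ] ℂ) :
    ‖piFCLM f π φ‖ ≤ ‖φ‖ := by
  refine ContinuousLinearMap.opNorm_le_bound _ (norm_nonneg φ) fun a => ?_
  calc ‖piFCLM f π φ a‖ ≤ ∑ i, (π i : ℝ) * (‖φ‖ * ‖a‖) := by
        rw [coe_piFCLM, piF]
        refine (norm_sum_le _ _).trans (Finset.sum_le_sum fun i _ => ?_)
        rw [norm_mul, Complex.norm_real, Real.norm_of_nonneg (π i).coe_nonneg]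
        gcongr
        exact φ.le_opNorm_of_le (NonUnitalStarAlgHom.norm_apply_le _ a)
    _ = ‖φ‖ * ‖a‖ := by rw [← Finset.sum_mul, ← NNReal.coe_sum, hπ, NNReal.coe_one, one_mul]

lemma norm_piFCLM_iterate_le {π : Fin k → ℝ≥0} (hπ : ∑ i, π i = 1) (φ : B →L[ℂ] ℂ) :
    ∀ M : ℕ, ‖(piFCLM f π)^[M] φ‖ ≤ ‖φ‖
  | 0 => le_rfl
  | M + 1 => by
    rw [Function.iterate_succ_apply']
    exact (norm_piFCLM_le f hπ _).trans (norm_piFCLM_iterate_le hπ φ M)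

end Words

section Cylinders

variable {α : Type*} [MeasurableSpace α]

lemma measurable_restrict_fin (M : ℕ) : Measurable fun (ω : ℕ → α) (i : Fin M) => ω i :=
  measurable_pi_lambda _ fun _ => measurable_pi_apply _

lemma integral_comp_restrict_fin [Fintype α] [MeasurableSingletonClass α] {E : Type*}
    [NormedAddCommGroup E] [NormedSpace ℝ E] [CompleteSpace E] (P : Measure (ℕ → α))
    [IsFiniteMeasure P] (M : ℕ) (g : (Fin M → α) → E) :
    ∫ ω, g (fun i => ω i) ∂P = ∑ τ, P.real {ω | ∀ i : Fin M, ω i = τ i} • g τ := by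
  rw [← integral_map (measurable_restrict_fin M).aemeasurable
    AEStronglyMeasurable.of_discrete, integral_fintype Integrable.of_finite]
  refine Finset.sum_congr rfl fun τ _ => ?_
  rw [map_measureReal_apply (measurable_restrict_fin M) (measurableSet_singleton τ)]
  congr 2
  ext ω
  simp [funext_iff]

end Cylinders

lemma piF_iterate_apply_eq_integral {B : Type*} [NonUnitalCStarAlgebra B] {k : ℕ}
    (f : Fin k → B →⋆ₙₐ[ℂ] B) (π : Fin k → ℝ≥0) (P : Measure (ℕ → Fin k)) [IsFiniteMeasure P]
    (hP : ∀ (M : ℕ) (ω : Fin M → Fin k),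
      P {ω' : ℕ → Fin k | ∀ i : Fin M, ω' i.val = ω i} = ∏ i, (π (ω i) : ℝ≥0∞))
    (M : ℕ) (φ : B → ℂ) (a : B) :
    (piF f π)^[M] φ a = ∫ ω, φ (wordMapF f M (fun i => ω i.val) a) ∂P := by
  rw [piF_iterate_apply, integral_comp_restrict_fin P M fun τ => φ (wordMapF f M τ a)]
  refine Finset.sum_congr rfl fun τ _ => ?_
  rw [measureReal_def, hP, ENNReal.toReal_prod, Complex.real_smul]
  simp

section Convergence

variable {B : Type*} [NonUnitalCStarAlgebra B] {L : selfAdjoint B → ℝ≥0∞} {k : ℕ}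
  (f : Fin k → B →⋆ₙₐ[ℂ] B)

lemma tendsto_wordMapF_apply_of_tendsto_dL (hL : IsESeminorm L)
    (hdense : Dense {b : selfAdjoint B | L b < ⊤}) {φ ψ : B →L[ℂ] ℂ} {ω : ℕ → Fin k}
    (h : Tendsto (fun M => dL L (fun a => φ (wordMapF f M (fun i => ω i.val) a)) ψ) atTop (𝓝 0))
    (a : B) : Tendsto (fun M => φ (wordMapF f M (fun i => ω i.val) a)) atTop (𝓝 (ψ a)) := by
  have hcoe (M : ℕ) : ⇑(φ.comp (wordHom f M fun i => ω i.val).toContinuousLinearMap) =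
      fun a => φ (wordMapF f M (fun i => ω i.val) a) := by
    ext
    simp [coe_wordHom]
  have hnorm (M : ℕ) : ‖φ.comp (wordHom f M fun i => ω i.val).toContinuousLinearMap‖ ≤ ‖φ‖ :=
    (φ.opNorm_comp_le _).trans
      (mul_le_of_le_one_right (norm_nonneg _) (NonUnitalStarAlgHom.norm_toContinuousLinearMap_le _))
  simpa only [hcoe] using
    tendsto_apply_of_tendsto_dL_of_bounded hL hdense hnorm (by simpa only [hcoe] using h) a

lemma tendsto_piF_iterate_apply_of_tendsto_dL (hL : IsESeminorm L)
    (hdense : Dense {b : selfAdjoint B | L b < ⊤}) {π : Fin k → ℝ≥0} (hπ : ∑ i, π i = 1)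
    {φ ψ : B →L[ℂ] ℂ} (h : Tendsto (fun M => dL L ((piF f π)^[M] φ) ψ) atTop (𝓝 0)) (a : B) :
    Tendsto (fun M => (piF f π)^[M] φ a) atTop (𝓝 (ψ a)) := by
  simpa only [coe_piFCLM_iterate] using
    tendsto_apply_of_tendsto_dL_of_bounded hL hdense (norm_piFCLM_iterate_le f hπ φ)
      (by simpa only [coe_piFCLM_iterate] using h) a

end Convergence

open MeasureTheory in
theorem selfSimilar_eq_integral_wordLimits_general (L : selfAdjoint A → ℝ≥0∞) (hL : IsECSMS L)
    {k : ℕ} (f : Fin k → A →⋆ₙₐ[ℂ] A)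
    (φ₀ : A →L[ℂ] ℂ)
    (π : Fin k → ℝ≥0) (hπ : ∑ i, π i = 1)
    (P : Measure (ℕ → Fin k)) [IsProbabilityMeasure P]
    (hP : ∀ (M : ℕ) (ω : Fin M → Fin k),
      P {ω' : ℕ → Fin k | ∀ i : Fin M, ω' i.val = ω i} = ∏ i, (π (ω i) : ℝ≥0∞))
    (Φ : (ℕ → Fin k) → (A →L[ℂ] ℂ))
    (hΦlim : ∀ ω : ℕ → Fin k,
      Tendsto (fun M => dL L (fun a => φ₀ (wordMapF f M (fun i => ω i.val) a)) ⇑(Φ ω))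
        atTop (𝓝 0))
    (φπ : A →L[ℂ] ℂ)
    (hφπ : Tendsto (fun M => dL L ((piF f π)^[M] ⇑φ₀) ⇑φπ) atTop (𝓝 0)) :
    ∀ a : A, Measurable (fun ω => Φ ω a) ∧ φπ a = ∫ ω, Φ ω a ∂P := by
  intro a
  have hwords (ω : ℕ → Fin k) :=
    tendsto_wordMapF_apply_of_tendsto_dL f hL.seminorm hL.dense_finite (hΦlim ω) a
  have hmeas (M : ℕ) : Measurable fun ω : ℕ → Fin k => φ₀ (wordMapF f M (fun i => ω i.val) a) :=
    (Measurable.of_discrete (f := fun τ => φ₀ (wordMapF f M τ a))).comp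
      (measurable_restrict_fin M)
  have hintegral := tendsto_integral_of_dominated_convergence (μ := P) (fun _ => ‖φ₀‖ * ‖a‖)
    (fun M => (hmeas M).aestronglyMeasurable) (integrable_const _)
    (fun M => .of_forall fun ω => φ₀.le_opNorm_of_le (norm_wordMapF_le f M _ a))
    (.of_forall hwords)
  refine ⟨measurable_of_tendsto_metrizable' atTop hmeas (tendsto_pi_nhds.2 hwords),
    tendsto_nhds_unique ?_ hintegral⟩
  simpa only [piF_iterate_apply_eq_integral f π P hP] using
    tendsto_piF_iterate_apply_of_tendsto_dL f hL.seminorm hL.dense_finite hπ hφπ a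

open MeasureTheory in
/-- The self-similar state `φ_π` is the `P_π`-average of the word-limit states `φ_ω`:
`ω ↦ φ_ω(a)` is measurable and `φ_π(a) = ∫ φ_ω(a) dP_π(ω)` for every `a : A`. -/
theorem selfSimilar_eq_integral_wordLimits (L : selfAdjoint A → ℝ≥0∞) (hL : IsECSMS L)
    {k : ℕ} (f : Fin k → A →⋆ₙₐ[ℂ] A) (hf : ∀ i, IsProperHom (f i))
    (Λ C : ℝ≥0∞) (hΛdef : Λ = ⨆ i, dilup L (f i)) (hΛ : Λ < 1)
    (φ₀ : A →L[ℂ] ℂ) (hφ₀ : IsState φ₀)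
    (hCdef : C = ⨆ i, dL L ⇑φ₀ (fun a => φ₀ (f i a))) (hC : C < ⊤)
    (π : Fin k → ℝ≥0) (hπ : ∑ i, π i = 1) (hπpos : ∀ i, 0 < π i)
    (P : Measure (ℕ → Fin k)) [IsProbabilityMeasure P]
    (hP : ∀ (M : ℕ) (ω : Fin M → Fin k),
      P {ω' : ℕ → Fin k | ∀ i : Fin M, ω' i.val = ω i} = ∏ i, (π (ω i) : ℝ≥0∞))
    (Φ : (ℕ → Fin k) → (A →L[ℂ] ℂ)) (hΦstate : ∀ ω, IsState (Φ ω))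
    (hΦlim : ∀ ω : ℕ → Fin k,
      Tendsto (fun M => dL L (fun a => φ₀ (wordMapF f M (fun i => ω i.val) a)) ⇑(Φ ω))
        atTop (𝓝 0))
    (φπ : A →L[ℂ] ℂ) (hφπstate : IsState φπ)
    (hφπ : Tendsto (fun M => dL L ((piF f π)^[M] ⇑φ₀) ⇑φπ) atTop (𝓝 0)) :
    ∀ a : A, Measurable (fun ω => Φ ω a) ∧ φπ a = ∫ ω, Φ ω a ∂P :=
  selfSimilar_eq_integral_wordLimits_general L hL f φ₀ π hπ P hP Φ hΦlim φπ hφπ
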